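/- arXiv:math/0307332 — 2 statements merged into one kernel-verified Lean document; each statement's English description precedes it below -/
import Mathlib

section
/- Let n ≥ 2. Let M(ζ) be the 2n × 2n block matrix [[C₁, C₂], [C₃, C₄]] with n × n diagonal blocks C₁ = diag(ζ², 0, …, 0), C₂ = diag(0, -ζ, …, -ζ), C₃ = diag(-2ζ, -ζ, …, -ζ), C₄ = diag(-1, 0, …, 0), and set B(ζ) = -M(ζ). Then B admits a Birkhoff factorization in which all 2n partial indices are equal to 1: there exist continuous maps F⁺ : closure(Δ) → GL(2n, ℂ) and G : closure(Δ) → GL(2n, ℂ), each holomorphic (entrywise) on the open unit disc Δ, such that for every ζ with |ζ| = 1, B(ζ) = ζ · F⁺(ζ) · G(ζ⁻¹). In particular the Maslov index (the sum of the partial indices) of the conormal bundle of the unit sphere along the lift of a stationary disc equals 2n. -/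
open Metric

namespace Stmt6Aux

noncomputable def Fm (n : ℕ) (ζ : ℂ) : Matrix (Fin (2*n)) (Fin (2*n)) ℂ :=
  fun r c =>
    if (r:ℕ) = 0 then (if (c:ℕ) = 0 then -ζ else if (c:ℕ) = n then 2⁻¹ else 0)
    else if (r:ℕ) = n then (if (c:ℕ) = 0 then 2 else 0)
    else if (r:ℕ) < n then (if (c:ℕ) = (r:ℕ) + n then 1 else 0)
    else (if (c:ℕ) + n = (r:ℕ) then 1 else 0)

noncomputable def Fi (n : ℕ) (ζ : ℂ) : Matrix (Fin (2*n)) (Fin (2*n)) ℂ :=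
  fun r c =>
    if (r:ℕ) = 0 then (if (c:ℕ) = n then 2⁻¹ else 0)
    else if (r:ℕ) = n then (if (c:ℕ) = 0 then 2 else if (c:ℕ) = n then ζ else 0)
    else if (r:ℕ) < n then (if (c:ℕ) = (r:ℕ) + n then 1 else 0)
    else (if (c:ℕ) + n = (r:ℕ) then 1 else 0)

noncomputable def Gm (n : ℕ) (w : ℂ) : Matrix (Fin (2*n)) (Fin (2*n)) ℂ :=
  fun r c => (if r = c then 1 else 0) + (if (r:ℕ) = 0 ∧ (c:ℕ) = n then w/2 else 0)

lemma rowmul1 {m : ℕ} (p : Fin m) (a : ℂ) (x : Fin m → ℂ) :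
    (∑ k, (if k = p then a else 0) * x k) = a * x p := by
  simp [ite_mul, Finset.sum_ite_eq']

lemma rowmul {m : ℕ} (p q : Fin m) (a b : ℂ) (h : p ≠ q ∨ b = 0) (x : Fin m → ℂ) :
    (∑ k, (if k = p then a else if k = q then b else 0) * x k) = a * x p + b * x q := by
  have key : ∀ k : Fin m, (if k = p then a else if k = q then b else 0) * x k
      = (if k = p then a else 0) * x k + (if k = q then b else 0) * x k := by
    intro k
    by_cases h1 : k = p <;> by_cases h2 : k = q <;>
      rcases h with h | h <;> simp_all
  rw [Finset.sum_congr rfl fun k _ => key k, Finset.sum_add_distrib, rowmul1, rowmul1]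

lemma Fm_mul (n : ℕ) (hn : 0 < n) (ζ : ℂ) (X : Matrix (Fin (2*n)) (Fin (2*n)) ℂ)
    (r c : Fin (2*n)) :
    (Fm n ζ * X) r c =
      if (r:ℕ) = 0 then -ζ * X ⟨0, by omega⟩ c + 2⁻¹ * X ⟨n, by omega⟩ c
      else if (r:ℕ) = n then 2 * X ⟨0, by omega⟩ c
      else if hr3 : (r:ℕ) < n then X ⟨(r:ℕ) + n, by omega⟩ c
      else X ⟨(r:ℕ) - n, by have := r.isLt; omega⟩ c := by
  rw [Matrix.mul_apply]
  split_ifs with h1 h2 h3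
  · have row : ∀ k : Fin (2*n), Fm n ζ r k =
        if k = ⟨0, by omega⟩ then -ζ else if k = ⟨n, by omega⟩ then (2:ℂ)⁻¹ else 0 := by
      intro k
      simp only [Fm]
      rw [if_pos h1]
      simp only [Fin.ext_iff]
    rw [Finset.sum_congr rfl fun k _ => by rw [row k]]
    exact rowmul _ _ _ _ (Or.inl (Fin.ne_of_val_ne (by simp; omega))) _
  · have row : ∀ k : Fin (2*n), Fm n ζ r k =
        if k = ⟨0, by omega⟩ then (2:ℂ) else 0 := by
      intro k
      simp only [Fm]
      rw [if_neg h1, if_pos h2]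
      simp only [Fin.ext_iff]
    rw [Finset.sum_congr rfl fun k _ => by rw [row k]]
    rw [rowmul1]
  · have row : ∀ k : Fin (2*n), Fm n ζ r k =
        if k = ⟨(r:ℕ) + n, by omega⟩ then (1:ℂ) else 0 := by
      intro k
      simp only [Fm]
      rw [if_neg h1, if_neg h2, if_pos h3]
      simp only [Fin.ext_iff]
    rw [Finset.sum_congr rfl fun k _ => by rw [row k]]
    rw [rowmul1, one_mul]
  · have row : ∀ k : Fin (2*n), Fm n ζ r k =
        if k = ⟨(r:ℕ) - n, by have := r.isLt; omega⟩ then (1:ℂ) else 0 := by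
      intro k
      simp only [Fm]
      rw [if_neg h1, if_neg h2, if_neg h3]
      simp only [Fin.ext_iff]
      split_ifs <;> first | rfl | omega
    rw [Finset.sum_congr rfl fun k _ => by rw [row k]]
    rw [rowmul1, one_mul]

lemma Gm_mul (n : ℕ) (hn : 0 < n) (w : ℂ) (X : Matrix (Fin (2*n)) (Fin (2*n)) ℂ)
    (r c : Fin (2*n)) :
    (Gm n w * X) r c =
      X r c + if (r:ℕ) = 0 then (w/2) * X ⟨n, by omega⟩ c else 0 := by
  rw [Matrix.mul_apply]
  by_cases h1 : (r:ℕ) = 0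
  · have row : ∀ k : Fin (2*n), Gm n w r k =
        if k = r then 1 else if k = ⟨n, by omega⟩ then w/2 else 0 := by
      intro k
      simp only [Gm, h1, true_and, Fin.ext_iff, Fin.val_mk]
      split_ifs <;> first | omega | (exfalso; omega) | (norm_num; done)
    rw [Finset.sum_congr rfl fun k _ => by rw [row k]]
    rw [rowmul _ _ _ _ (Or.inl (Fin.ne_of_val_ne (by simp [h1]; omega))) _]
    rw [if_pos h1, one_mul]
  · have row : ∀ k : Fin (2*n), Gm n w r k = if k = r then (1:ℂ) else 0 := by
      intro k
      simp only [Gm, h1, false_and, if_false, add_zero]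
      simp [eq_comm]
    rw [Finset.sum_congr rfl fun k _ => by rw [row k]]
    rw [rowmul1, one_mul, if_neg h1, add_zero]

lemma Fm_mul_Fi (n : ℕ) (hn : 0 < n) (ζ : ℂ) : Fm n ζ * Fi n ζ = 1 := by
  ext r c
  rw [Fm_mul n hn, Matrix.one_apply]
  have hr := r.isLt
  have hc := c.isLt
  simp only [Fi, Fin.ext_iff, Fin.val_mk]
  split_ifs <;> first | omega | (exfalso; omega) | (norm_num; done) | ring

lemma Gm_mul_Gm (n : ℕ) (hn : 0 < n) (w : ℂ) : Gm n w * Gm n (-w) = 1 := by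
  ext r c
  rw [Gm_mul n hn, Matrix.one_apply]
  simp only [Gm, Fin.ext_iff, Fin.val_mk]
  split_ifs <;> first | omega | (exfalso; omega) | (norm_num; done) | ring

lemma Fm_affine (n : ℕ) (ζ : ℂ) (i j : Fin (2*n)) :
    Fm n ζ i j = ζ * (Fm n 1 i j - Fm n 0 i j) + Fm n 0 i j := by
  simp only [Fm]; split_ifs <;> ring

lemma Gm_affine (n : ℕ) (w : ℂ) (i j : Fin (2*n)) :
    Gm n w i j = w * (Gm n 1 i j - Gm n 0 i j) + Gm n 0 i j := by
  simp only [Gm]; split_ifs <;> ring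

end Stmt6Aux

open Stmt6Aux

/-- Birkhoff factorization with all `2n` partial indices equal to `1` of the matrix
`B(ζ) = -M(ζ)` arising from the conormal bundle of the unit sphere along the lift of
a stationary disc: there are matrix functions `F⁺` and `G`, continuous on the closed
unit disc, entrywise holomorphic on the open disc and invertible there, with
`B(ζ) = ζ · F⁺(ζ) · G(ζ⁻¹)` on the unit circle (so `Λ(ζ) = ζ·I`, and the Maslov
index, the sum of the partial indices, is `2n`). -/
theorem stmt6 (n : ℕ) (hn : 2 ≤ n)
    (M : ℂ → Matrix (Fin (2 * n)) (Fin (2 * n)) ℂ)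
    (hM : ∀ ζ : ℂ, ∀ r c : Fin (2 * n), M ζ r c =
      if (r : ℕ) < n then
        (if (c : ℕ) < n then
          (if r = c ∧ (r : ℕ) = 0 then ζ ^ 2 else 0)
         else
          (if (c : ℕ) = (r : ℕ) + n ∧ (r : ℕ) ≠ 0 then -ζ else 0))
      else
        (if (c : ℕ) < n then
          (if (r : ℕ) = (c : ℕ) + n then (if (c : ℕ) = 0 then -2 * ζ else -ζ) else 0)
         else
          (if r = c ∧ (r : ℕ) = n then -1 else 0))) :
    ∃ F G : ℂ → Matrix (Fin (2 * n)) (Fin (2 * n)) ℂ,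
      (∀ i j, ContinuousOn (fun ζ => F ζ i j) (closedBall 0 1)) ∧
      (∀ i j, DifferentiableOn ℂ (fun ζ => F ζ i j) (ball 0 1)) ∧
      (∀ ζ ∈ closedBall (0 : ℂ) 1, IsUnit (F ζ)) ∧
      (∀ i j, ContinuousOn (fun ζ => G ζ i j) (closedBall 0 1)) ∧
      (∀ i j, DifferentiableOn ℂ (fun ζ => G ζ i j) (ball 0 1)) ∧
      (∀ ζ ∈ closedBall (0 : ℂ) 1, IsUnit (G ζ)) ∧
      ∀ ζ : ℂ, ‖ζ‖ = 1 → -(M ζ) = ζ • (F ζ * G ζ⁻¹) := by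
  have hn0 : 0 < n := by omega
  refine ⟨Fm n, Gm n, ?_, ?_, ?_, ?_, ?_, ?_, ?_⟩
  · intro i j
    rw [show (fun ζ => Fm n ζ i j)
        = fun ζ => ζ * (Fm n 1 i j - Fm n 0 i j) + Fm n 0 i j from
      funext fun ζ => Fm_affine n ζ i j]
    fun_prop
  · intro i j
    rw [show (fun ζ => Fm n ζ i j)
        = fun ζ => ζ * (Fm n 1 i j - Fm n 0 i j) + Fm n 0 i j from
      funext fun ζ => Fm_affine n ζ i j]
    fun_prop
  · intro ζ _
    have h1 := Fm_mul_Fi n hn0 ζ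
    exact ⟨⟨Fm n ζ, Fi n ζ, h1, mul_eq_one_comm.mp h1⟩, rfl⟩
  · intro i j
    rw [show (fun w => Gm n w i j)
        = fun w => w * (Gm n 1 i j - Gm n 0 i j) + Gm n 0 i j from
      funext fun w => Gm_affine n w i j]
    fun_prop
  · intro i j
    rw [show (fun w => Gm n w i j)
        = fun w => w * (Gm n 1 i j - Gm n 0 i j) + Gm n 0 i j from
      funext fun w => Gm_affine n w i j]
    fun_prop
  · intro w _
    have h1 := Gm_mul_Gm n hn0 w
    exact ⟨⟨Gm n w, Gm n (-w), h1, mul_eq_one_comm.mp h1⟩, rfl⟩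
  · intro ζ hζ
    have hζ0 : ζ ≠ 0 := by
      intro h; rw [h] at hζ; simp at hζ
    ext r c
    rw [Matrix.neg_apply, hM, Matrix.smul_apply, smul_eq_mul, Fm_mul n hn0]
    have hr := r.isLt
    have hc := c.isLt
    simp only [Gm, Fin.ext_iff, Fin.val_mk, true_and, and_true, ne_eq]
    split_ifs <;>
      first
        | (exfalso; omega)
        | ring1
        | (field_simp [hζ0]; ring1)
        | linear_combination (ζ/2) * (mul_inv_cancel₀ hζ0)
        | linear_combination -(mul_inv_cancel₀ hζ0)
end

section
/- Let n ≥ 1, let z ∈ ℂⁿ with ‖z‖ = 1, and let c ∈ ℝ with c ≠ 0. Define the subset T ⊆ ℂⁿ × ℂⁿ by T = { (v, t·conj(z) + c·conj(v)) : v ∈ ℂⁿ, Re⟨v, z⟩ = 0, t ∈ ℝ }, where conj acts componentwise and ⟨v, z⟩ = ∑_j v_j conj(z_j). Then T is a real-linear subspace of ℂⁿ × ℂⁿ of real dimension 2n, and T is totally real: if u ∈ T and i·u ∈ T then u = 0. -/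
open Complex

noncomputable def stmt7conjL (n : ℕ) :
    EuclideanSpace ℂ (Fin n) →ₗ[ℝ] EuclideanSpace ℂ (Fin n) where
  toFun v := WithLp.toLp 2 (fun j => (starRingEnd ℂ) (v j))
  map_add' x y := PiLp.ext fun j => by simp [PiLp.add_apply]
  map_smul' r x := PiLp.ext fun j => by
    simp [PiLp.smul_apply, Complex.real_smul]

noncomputable def stmt7reF (n : ℕ) (z : EuclideanSpace ℂ (Fin n)) :
    EuclideanSpace ℂ (Fin n) →ₗ[ℝ] ℝ where
  toFun v := (∑ j, v j * (starRingEnd ℂ) (z j)).re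
  map_add' x y := by
    simp [PiLp.add_apply, add_mul, Finset.sum_add_distrib]
  map_smul' r x := by
    simp [PiLp.smul_apply, Complex.real_smul, Finset.mul_sum, mul_assoc, Complex.re_sum]

noncomputable def stmt7Phi (n : ℕ) (z : EuclideanSpace ℂ (Fin n)) (c : ℝ) :
    (EuclideanSpace ℂ (Fin n) × ℝ) →ₗ[ℝ]
      (EuclideanSpace ℂ (Fin n) × EuclideanSpace ℂ (Fin n)) :=
  (LinearMap.fst ℝ _ _).prod
    ((LinearMap.snd ℝ (EuclideanSpace ℂ (Fin n)) ℝ).smulRight (stmt7conjL n z)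
      + c • (stmt7conjL n ∘ₗ LinearMap.fst ℝ _ _))

lemma stmt7Phi_apply (n : ℕ) (z v : EuclideanSpace ℂ (Fin n)) (c t : ℝ) :
    stmt7Phi n z c (v, t) = (v, (WithLp.toLp 2 (fun j => (t : ℂ) * (starRingEnd ℂ) (z j)
        + (c : ℂ) * (starRingEnd ℂ) (v j)) : EuclideanSpace ℂ (Fin n))) := by
  refine Prod.ext rfl (PiLp.ext fun j => ?_)
  simp [stmt7Phi, stmt7conjL, PiLp.add_apply, PiLp.smul_apply, Complex.real_smul]

lemma stmt7Phi_inj (n : ℕ) (z : EuclideanSpace ℂ (Fin n)) (c : ℝ)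
    (hz : ‖z‖ = 1) : Function.Injective (stmt7Phi n z c) := by
  have hz0 : z ≠ 0 := by intro h; rw [h] at hz; simp at hz
  rw [← LinearMap.ker_eq_bot]
  ext ⟨v, t⟩
  simp only [LinearMap.mem_ker, Submodule.mem_bot, stmt7Phi, LinearMap.prod_apply,
    Function.prod, Prod.mk_eq_zero, Prod.mk.injEq]
  constructor
  · rintro ⟨rfl, h2⟩
    refine ⟨rfl, ?_⟩
    simp only [LinearMap.add_apply, LinearMap.smulRight_apply, LinearMap.snd_apply,
      LinearMap.smul_apply, LinearMap.comp_apply, LinearMap.fst_apply, map_zero,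
      smul_zero, add_zero] at h2
    by_contra ht
    apply hz0
    have hcz : stmt7conjL n z = 0 := by
      have := smul_eq_zero.mp h2
      tauto
    ext j
    have hj : (starRingEnd ℂ) (z j) = 0 := congrArg (fun x => x j) hcz
    simpa using hj
  · rintro ⟨rfl, rfl⟩; simp

lemma stmt7_znormsq (n : ℕ) (z : EuclideanSpace ℂ (Fin n)) (hz : ‖z‖ = 1) :
    ∑ j, z j * (starRingEnd ℂ) (z j) = 1 := by
  have h : ∑ j, z j * (starRingEnd ℂ) (z j) = ((∑ j, ‖z j‖ ^ 2 : ℝ) : ℂ) := by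
    push_cast
    refine Finset.sum_congr rfl fun j _ => ?_
    rw [Complex.mul_conj]
    norm_cast
    rw [Complex.normSq_eq_norm_sq]
  have h2 : ∑ j, ‖z j‖ ^ 2 = 1 := by
    have := EuclideanSpace.norm_eq z
    rw [hz] at this
    have h3 : (0:ℝ) ≤ ∑ j, ‖z j‖ ^ 2 :=
      Finset.sum_nonneg fun j _ => sq_nonneg _
    nlinarith [Real.sq_sqrt h3, Real.sqrt_nonneg (∑ j, ‖z j‖ ^ 2)]
  rw [h, h2]; norm_num

/-- The tangent space `T` at the point `(z, c·conj z)` of the conormal bundle of the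
unit sphere of `ℂⁿ` (minus the zero section) is a real-linear subspace of
`ℂⁿ × ℂⁿ` of real dimension `2n`, and it is totally real: `T ∩ iT = {0}`. -/
theorem stmt7 (n : ℕ) (hn : 1 ≤ n) (z : EuclideanSpace ℂ (Fin n)) (hz : ‖z‖ = 1)
    (c : ℝ) (hc : c ≠ 0)
    (T : Set (EuclideanSpace ℂ (Fin n) × EuclideanSpace ℂ (Fin n)))
    (hT : T = { p | ∃ (v : EuclideanSpace ℂ (Fin n)) (t : ℝ),
      (∑ j, v j * (starRingEnd ℂ) (z j)).re = 0 ∧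
      p = (v, (WithLp.toLp 2 (fun j => (t : ℂ) * (starRingEnd ℂ) (z j)
        + (c : ℂ) * (starRingEnd ℂ) (v j)) : EuclideanSpace ℂ (Fin n))) }) :
    (∃ W : Submodule ℝ (EuclideanSpace ℂ (Fin n) × EuclideanSpace ℂ (Fin n)),
      (W : Set (EuclideanSpace ℂ (Fin n) × EuclideanSpace ℂ (Fin n))) = T ∧
      Module.finrank ℝ W = 2 * n) ∧
    ∀ u ∈ T, Complex.I • u ∈ T → u = 0 := by
  set g : (EuclideanSpace ℂ (Fin n) × ℝ) →ₗ[ℝ] ℝ := (stmt7reF n z) ∘ₗ LinearMap.fst ℝ (EuclideanSpace ℂ (Fin n)) ℝ with hg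
  set K : Submodule ℝ (EuclideanSpace ℂ (Fin n) × ℝ) := LinearMap.ker g with hK
  constructor
  · refine ⟨K.map (stmt7Phi n z c), ?_, ?_⟩
    · ext p
      simp only [Submodule.map_coe, Set.mem_image, hT, Set.mem_setOf_eq]
      constructor
      · rintro ⟨⟨v, t⟩, hvt, rfl⟩
        exact ⟨v, t, by simpa [hK, hg, stmt7reF] using hvt, (stmt7Phi_apply n z v c t).symm⟩
      · rintro ⟨v, t, h1, rfl⟩
        exact ⟨(v, t), by simpa [hK, hg, stmt7reF] using h1, stmt7Phi_apply n z v c t⟩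
    · rw [(K.equivMapOfInjective _ (stmt7Phi_inj n z c hz)).finrank_eq.symm]
      -- finrank K = 2n
      have hrank := g.finrank_range_add_finrank_ker
      have hsurj : Function.Surjective g := by
        intro r
        refine ⟨r • (z, 0), ?_⟩
        have h1 : g (z, 0) = 1 := by
          simp only [hg, LinearMap.comp_apply, LinearMap.fst_apply, stmt7reF,
            LinearMap.coe_mk, AddHom.coe_mk]
          rw [stmt7_znormsq n z hz]; simp
        rw [map_smul, h1]; simp
      have hrange : LinearMap.range g = ⊤ := LinearMap.range_eq_top.mpr hsurj
      rw [hrange] at hrank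
      have hE : Module.finrank ℝ (EuclideanSpace ℂ (Fin n) × ℝ) = 2 * n + 1 := by
        rw [Module.finrank_prod]
        have : Module.finrank ℝ (EuclideanSpace ℂ (Fin n)) = 2 * n := by
          rw [← Module.finrank_mul_finrank ℝ ℂ (EuclideanSpace ℂ (Fin n)), Complex.finrank_real_complex,
            finrank_euclideanSpace_fin]
        simp [this]
      rw [hE] at hrank
      simp only [finrank_top, Module.finrank_self] at hrank
      rw [hK]; omega
  · rintro u hu hiu
    rw [hT] at hu hiu
    obtain ⟨v, t, h1, rfl⟩ := hu
    obtain ⟨w, s, h2, heq⟩ := hiu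
    have hfst : Complex.I • v = w := congrArg Prod.fst heq
    have hsnd := congrArg Prod.snd heq
    subst hfst
    -- pointwise second-component equation
    have key : ∀ j, Complex.I * ((t : ℂ) * (starRingEnd ℂ) (z j)
        + (c : ℂ) * (starRingEnd ℂ) (v j))
        = (s : ℂ) * (starRingEnd ℂ) (z j)
          + (c : ℂ) * (starRingEnd ℂ) (Complex.I * v j) := by
      intro j
      have hj := congrArg (fun x => x j) hsnd
      simpa [PiLp.smul_apply, smul_eq_mul] using hj
    set μ : ℂ := ((s : ℂ) - Complex.I * t) / (2 * Complex.I * c) with hμ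
    have h2Ic : (2 * Complex.I * (c : ℂ)) ≠ 0 := by
      simp [Complex.I_ne_zero, hc, Complex.ofReal_eq_zero]
    have hcv : ∀ j, (starRingEnd ℂ) (v j) = μ * (starRingEnd ℂ) (z j) := by
      intro j
      have hk := key j
      simp only [map_mul, Complex.conj_I] at hk
      rw [hμ, div_mul_eq_mul_div, eq_div_iff h2Ic]
      ring_nf
      ring_nf at hk
      linear_combination hk
    have hv : ∀ j, v j = (starRingEnd ℂ) μ * z j := by
      intro j
      have := congrArg (starRingEnd ℂ) (hcv j)
      simpa using this
    have hsum1 : ∑ j, v j * (starRingEnd ℂ) (z j) = (starRingEnd ℂ) μ := by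
      calc ∑ j, v j * (starRingEnd ℂ) (z j)
          = (starRingEnd ℂ) μ * ∑ j, z j * (starRingEnd ℂ) (z j) := by
            rw [Finset.mul_sum]
            exact Finset.sum_congr rfl fun j _ => by rw [hv j]; ring
        _ = (starRingEnd ℂ) μ := by rw [stmt7_znormsq n z hz, mul_one]
    have hre : μ.re = 0 := by
      rw [hsum1] at h1
      simpa using h1
    have hsum2 : ∑ j, (Complex.I • v) j * (starRingEnd ℂ) (z j)
        = Complex.I * (starRingEnd ℂ) μ := by
      calc ∑ j, (Complex.I • v) j * (starRingEnd ℂ) (z j)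
          = Complex.I * ∑ j, v j * (starRingEnd ℂ) (z j) := by
            rw [Finset.mul_sum]
            exact Finset.sum_congr rfl fun j _ => by
              simp [PiLp.smul_apply, smul_eq_mul]; ring
        _ = Complex.I * (starRingEnd ℂ) μ := by rw [hsum1]
    have him : μ.im = 0 := by
      rw [hsum2] at h2
      simpa using h2
    have hμ0 : μ = 0 := Complex.ext hre him
    have hv0 : ∀ j, v j = 0 := fun j => by rw [hv j, hμ0]; simp
    -- now show t = 0 using a coordinate where z is nonzero
    obtain ⟨j0, hj0⟩ : ∃ j, z j ≠ 0 := by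
      by_contra h
      push_neg at h
      have : z = 0 := PiLp.ext h
      rw [this] at hz
      simp at hz
    have hkey0 := key j0
    rw [hv0 j0] at hkey0
    simp only [map_zero, mul_zero, add_zero, mul_zero, map_mul, Complex.conj_I] at hkey0
    have hzj : (starRingEnd ℂ) (z j0) ≠ 0 := by
      simpa using hj0
    have hIt : Complex.I * (t : ℂ) = (s : ℂ) :=
      mul_right_cancel₀ hzj (show (Complex.I * (t:ℂ)) * (starRingEnd ℂ) (z j0)
        = (s:ℂ) * (starRingEnd ℂ) (z j0) by linear_combination hkey0)
    have ht0 : t = 0 := by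
      have := congrArg Complex.im hIt
      simpa using this
    have : v = 0 := PiLp.ext hv0
    rw [this, ht0]
    refine Prod.ext rfl (PiLp.ext fun j => ?_)
    simp
end
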